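/- arXiv:1810.07956 — 2 statements merged into one kernel-verified Lean document; each statement's English description precedes it below -/
import Mathlib

section
/- For n ≥ 1, A_{2n+1}(p,q) = A_{2n}(p,q) + p·Σ_{i=0}^{n-1} C(2n,2i)·A_{2i}(p,q)·A_{2n-2i}(q,p) + q·Σ_{i=1}^{n} C(2n,2i-1)·A_{2i-1}(p,q)·A_{2n-2i+1}(p,q). -/
open Finset

/-- The set of (0-based) descent indices of a permutation of `Fin n`:
`i` is a descent index if `π i > π (i+1)` (so the 1-based descent position is `i+1`). -/
def descentSet {n : ℕ} (π : Equiv.Perm (Fin n)) : Finset ℕ :=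
  (Finset.range n).filter
    (fun i => ∃ h : i + 1 < n, π ⟨i + 1, h⟩ < π ⟨i, Nat.lt_of_succ_lt h⟩)

/-- The number of descents of `π`. -/
def des {n : ℕ} (π : Equiv.Perm (Fin n)) : ℕ := (descentSet π).card

/-- The number of descents of `π` at odd (1-based) positions, i.e. even 0-based indices. -/
def odes {n : ℕ} (π : Equiv.Perm (Fin n)) : ℕ :=
  ((descentSet π).filter (fun i => Even i)).card

/-- The number of descents of `π` at even (1-based) positions, i.e. odd 0-based indices. -/
def edes {n : ℕ} (π : Equiv.Perm (Fin n)) : ℕ :=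
  ((descentSet π).filter (fun i => Odd i)).card

/-- The refined Eulerian polynomial `A_n(p,q) = Σ_π p^{odes π} q^{edes π}`. -/
def refinedEulerian (n : ℕ) (p q : ℝ) : ℝ :=
  ∑ π : Equiv.Perm (Fin n), p ^ odes π * q ^ edes π

/-- The Eulerian polynomial `A_n(q) = Σ_π q^{des π}` as a function. -/
def eulerianEval (n : ℕ) (q : ℝ) : ℝ :=
  ∑ π : Equiv.Perm (Fin n), q ^ des π

/-- The Eulerian polynomial `A_n(q)` as a polynomial. -/
noncomputable def eulerianPolynomial (n : ℕ) : Polynomial ℝ :=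
  ∑ π : Equiv.Perm (Fin n), Polynomial.X ^ des π

/-- The Eulerian number `A_{n,k}`: the number of permutations of `[n]` with `k` descents. -/
def eulerianNumber (n k : ℕ) : ℕ :=
  (Finset.univ.filter (fun π : Equiv.Perm (Fin n) => des π = k)).card

/-- A permutation `a_1 a_2 … a_n` is alternating if `a_1 > a_2 < a_3 > ⋯`. -/
def IsAlternating {n : ℕ} (π : Equiv.Perm (Fin n)) : Prop :=
  ∀ i : ℕ, ∀ h : i + 1 < n,
    (π ⟨i + 1, h⟩ < π ⟨i, Nat.lt_of_succ_lt h⟩ ↔ Even i)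

open scoped Classical in
/-- The Euler number `E_n`: the number of alternating permutations of `[n]`. -/
noncomputable def eulerNumber (n : ℕ) : ℕ :=
  (Finset.univ.filter (fun π : Equiv.Perm (Fin n) => IsAlternating π)).card

/-- `a_{n,k}`: the number of permutations of `[n]` with `k` even descents and no odd descents. -/
def aNum (n k : ℕ) : ℕ :=
  (Finset.univ.filter (fun π : Equiv.Perm (Fin n) => edes π = k ∧ odes π = 0)).card

/-! word machinery -/

def wset (g : ℕ) (w : ℕ → ℕ) : Finset ℕ :=
  (Finset.range g).filter (fun i => w (i + 1) < w i)

def ecard (g s : ℕ) (w : ℕ → ℕ) : ℕ :=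
  ((wset g w).filter (fun i => Even (i + s))).card

def ocard (g s : ℕ) (w : ℕ → ℕ) : ℕ :=
  ((wset g w).filter (fun i => Odd (i + s))).card

noncomputable def wgt (g s : ℕ) (w : ℕ → ℕ) (p q : ℝ) : ℝ :=
  p ^ ecard g s w * q ^ ocard g s w

def wd {a : ℕ} (v : Fin a → ℕ) : ℕ → ℕ := fun i => if h : i < a then v ⟨i, h⟩ else 0

lemma wset_congr {g : ℕ} {w w' : ℕ → ℕ}
    (h : ∀ i < g, (w (i + 1) < w i ↔ w' (i + 1) < w' i)) : wset g w = wset g w' := by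
  unfold wset
  apply Finset.filter_congr
  intro i hi
  simpa using h i (Finset.mem_range.1 hi)

lemma descentSet_eq {m : ℕ} (π : Equiv.Perm (Fin m)) :
    descentSet π = wset (m - 1) (wd (fun i => (π i : ℕ))) := by
  ext i
  simp only [descentSet, wset, wd, Finset.mem_filter, Finset.mem_range]
  constructor
  · rintro ⟨hi, h, hlt⟩
    have hi1 : i < m - 1 := by omega
    refine ⟨hi1, ?_⟩
    rw [dif_pos h, dif_pos (Nat.lt_of_succ_lt h)]
    exact_mod_cast hlt
  · rintro ⟨hi1, hlt⟩
    have h : i + 1 < m := by omega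
    rw [dif_pos h, dif_pos (Nat.lt_of_succ_lt h)] at hlt
    exact ⟨by omega, h, by exact_mod_cast hlt⟩

lemma refinedEulerian_eq (m : ℕ) (p q : ℝ) :
    refinedEulerian m p q = ∑ π : Equiv.Perm (Fin m), wgt (m - 1) 0 (wd (fun i => (π i : ℕ))) p q := by
  apply Finset.sum_congr rfl
  intro π _
  rw [wgt, ecard, ocard, ← descentSet_eq]
  simp [odes, edes]

lemma wgt_shift_even {g s : ℕ} (hs : Even s) (w : ℕ → ℕ) (p q : ℝ) :
    wgt g s w p q = wgt g 0 w p q := by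
  have hs' := Nat.even_iff.1 hs
  unfold wgt ecard ocard
  rw [show (wset g w).filter (fun i => Even (i + s)) = (wset g w).filter (fun i => Even (i + 0)) from
      Finset.filter_congr (fun i _ => by simp only [Nat.even_iff]; omega),
    show (wset g w).filter (fun i => Odd (i + s)) = (wset g w).filter (fun i => Odd (i + 0)) from
      Finset.filter_congr (fun i _ => by simp only [Nat.odd_iff]; omega)]

lemma wgt_shift_odd {g s : ℕ} (hs : Odd s) (w : ℕ → ℕ) (p q : ℝ) :
    wgt g s w p q = wgt g 0 w q p := by
  have hs' := Nat.odd_iff.1 hs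
  unfold wgt ecard ocard
  rw [mul_comm,
    show (wset g w).filter (fun i => Even (i + s)) = (wset g w).filter (fun i => Odd (i + 0)) from
      Finset.filter_congr (fun i _ => by simp only [Nat.even_iff, Nat.odd_iff]; omega),
    show (wset g w).filter (fun i => Odd (i + s)) = (wset g w).filter (fun i => Even (i + 0)) from
      Finset.filter_congr (fun i _ => by simp only [Nat.even_iff, Nat.odd_iff]; omega)]

lemma wgt_congr {g s : ℕ} {w w' : ℕ → ℕ} (h : wset g w = wset g w') (p q : ℝ) :
    wgt g s w p q = wgt g s w' p q := by
  unfold wgt ecard ocard; rw [h]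

lemma sum_over_equiv {N a : ℕ} (s : Finset (Fin N)) (hs : s.card = a) (sh : ℕ) (p q : ℝ) :
    ∑ e : Fin a ≃ {x // x ∈ s}, wgt (a - 1) sh (wd (fun i => ((e i : Fin N) : ℕ))) p q
      = ∑ π : Equiv.Perm (Fin a), wgt (a - 1) sh (wd (fun i => ((π i : Fin a) : ℕ))) p q := by
  set ψ : {x // x ∈ s} ≃ Fin a := (s.orderIsoOfFin hs).symm.toEquiv with hψ
  apply Fintype.sum_bijective (fun e : Fin a ≃ {x // x ∈ s} => e.trans ψ)
  · refine Function.bijective_iff_has_inverse.2 ⟨fun f => f.trans ψ.symm, fun e => ?_, fun f => ?_⟩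
    · ext x; simp
    · ext x; simp
  · intro e
    apply wgt_congr
    apply wset_congr
    intro i hi
    have h1 : i + 1 < a := by omega
    have h0 : i < a := by omega
    simp only [wd, dif_pos h1, dif_pos h0, Equiv.trans_apply]
    have key : ∀ u v : {x // x ∈ s}, ((u : Fin N) : ℕ) < ((v : Fin N) : ℕ) ↔ ((ψ u : Fin a) : ℕ) < ((ψ v : Fin a) : ℕ) := by
      intro u v
      rw [← Fin.lt_iff_val_lt_val, ← Fin.lt_iff_val_lt_val]
      exact Subtype.coe_lt_coe.trans ((s.orderIsoOfFin hs).symm.lt_iff_lt).symm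
    exact key _ _

section glue
variable {N a b : ℕ}

def glueFun (hab : a + b = N) (s : Finset (Fin N))
    (e : Fin a ≃ {x // x ∈ s}) (f : Fin b ≃ {x // x ∈ (sᶜ : Finset (Fin N))}) : Fin N → Fin N :=
  fun k => if h : (k : ℕ) < a then (e ⟨(k : ℕ), h⟩ : Fin N)
    else (f ⟨(k : ℕ) - a, by have := k.isLt; omega⟩ : Fin N)

lemma glueFun_bij (hab : a + b = N) (s : Finset (Fin N))
    (e : Fin a ≃ {x // x ∈ s}) (f : Fin b ≃ {x // x ∈ (sᶜ : Finset (Fin N))}) :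
    Function.Bijective (glueFun hab s e f) := by
  rw [Fintype.bijective_iff_injective_and_card]
  refine ⟨?_, rfl⟩
  intro k k' h
  unfold glueFun at h
  by_cases h1 : (k : ℕ) < a <;> by_cases h2 : (k' : ℕ) < a
  · rw [dif_pos h1, dif_pos h2] at h
    have : (⟨(k : ℕ), h1⟩ : Fin a) = ⟨(k' : ℕ), h2⟩ := e.injective (Subtype.ext h)
    simp only [Fin.mk.injEq] at this
    exact Fin.ext this
  · rw [dif_pos h1, dif_neg h2] at h
    have hk : (e ⟨(k : ℕ), h1⟩ : Fin N) ∈ s := (e _).2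
    have hk' : (f ⟨(k' : ℕ) - a, by have := k'.isLt; omega⟩ : Fin N) ∈ sᶜ := (f _).2
    rw [← h] at hk'
    exact absurd hk (Finset.mem_compl.1 hk')
  · rw [dif_neg h1, dif_pos h2] at h
    have hk : (e ⟨(k' : ℕ), h2⟩ : Fin N) ∈ s := (e _).2
    have hk' : (f ⟨(k : ℕ) - a, by have := k.isLt; omega⟩ : Fin N) ∈ sᶜ := (f _).2
    rw [h] at hk'
    exact absurd hk (Finset.mem_compl.1 hk')
  · rw [dif_neg h1, dif_neg h2] at h
    have : (⟨(k : ℕ) - a, _⟩ : Fin b) = ⟨(k' : ℕ) - a, _⟩ := f.injective (Subtype.ext h)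
    have := congrArg Fin.val this
    simp only at this
    exact Fin.ext (by omega)

noncomputable def glueEquiv (hab : a + b = N) (s : Finset (Fin N))
    (e : Fin a ≃ {x // x ∈ s}) (f : Fin b ≃ {x // x ∈ (sᶜ : Finset (Fin N))}) :
    Equiv.Perm (Fin N) :=
  Equiv.ofBijective _ (glueFun_bij hab s e f)

lemma glueEquiv_apply_lt (hab : a + b = N) (s : Finset (Fin N))
    (e : Fin a ≃ {x // x ∈ s}) (f : Fin b ≃ {x // x ∈ (sᶜ : Finset (Fin N))})
    (k : Fin N) (h : (k : ℕ) < a) :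
    glueEquiv hab s e f k = (e ⟨(k : ℕ), h⟩ : Fin N) := by
  simp only [glueEquiv, Equiv.ofBijective_apply, glueFun, dif_pos h]

lemma glueEquiv_apply_ge (hab : a + b = N) (s : Finset (Fin N))
    (e : Fin a ≃ {x // x ∈ s}) (f : Fin b ≃ {x // x ∈ (sᶜ : Finset (Fin N))})
    (k : Fin N) (h : ¬ (k : ℕ) < a) :
    glueEquiv hab s e f k = (f ⟨(k : ℕ) - a, by have := k.isLt; omega⟩ : Fin N) := by
  simp only [glueEquiv, Equiv.ofBijective_apply, glueFun, dif_neg h]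

end glue

lemma card_filter_lt {N : ℕ} (a : ℕ) (ha : a ≤ N) :
    ((univ : Finset (Fin N)).filter (fun k : Fin N => (k : ℕ) < a)).card = a := by
  apply Finset.card_eq_of_bijective (fun i h => (⟨i, by omega⟩ : Fin N))
  · intro x hx
    rw [Finset.mem_filter] at hx
    exact ⟨(x : ℕ), hx.2, Fin.ext rfl⟩
  · intro i h
    rw [Finset.mem_filter]
    exact ⟨Finset.mem_univ _, h⟩
  · intro i j hi hj hij
    exact congrArg Fin.val hij

lemma key_split {N a b : ℕ} (hab : a + b = N) (sa sb : ℕ) (p q P Q : ℝ) :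
    ∑ σ : Equiv.Perm (Fin N),
      (wgt (a - 1) sa (wd (fun k => ((σ k : Fin N) : ℕ))) p q) *
      (wgt (b - 1) sb (fun i => wd (fun k => ((σ k : Fin N) : ℕ)) (a + i)) P Q)
    = (N.choose a : ℝ) *
      (∑ π : Equiv.Perm (Fin a), wgt (a - 1) sa (wd (fun i => ((π i : Fin a) : ℕ))) p q) *
      (∑ τ : Equiv.Perm (Fin b), wgt (b - 1) sb (wd (fun i => ((τ i : Fin b) : ℕ))) P Q) := by
  have hmaps : ∀ σ : Equiv.Perm (Fin N), σ ∈ (univ : Finset (Equiv.Perm (Fin N))) →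
      (Finset.image σ (univ.filter (fun k : Fin N => (k : ℕ) < a))) ∈
        Finset.powersetCard a (univ : Finset (Fin N)) := by
    intro σ _
    rw [Finset.mem_powersetCard]
    refine ⟨Finset.subset_univ _, ?_⟩
    rw [Finset.card_image_of_injective _ σ.injective, card_filter_lt a (by omega)]
  rw [← Finset.sum_fiberwise_of_maps_to hmaps]
  have hfiber : ∀ s ∈ Finset.powersetCard a (univ : Finset (Fin N)),
      (∑ σ ∈ Finset.filter
          (fun σ : Equiv.Perm (Fin N) =>
            Finset.image σ (univ.filter (fun k : Fin N => (k : ℕ) < a)) = s) univ,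
        (wgt (a - 1) sa (wd (fun k => ((σ k : Fin N) : ℕ))) p q) *
        (wgt (b - 1) sb (fun i => wd (fun k => ((σ k : Fin N) : ℕ)) (a + i)) P Q))
      = (∑ π : Equiv.Perm (Fin a), wgt (a - 1) sa (wd (fun i => ((π i : Fin a) : ℕ))) p q) *
        (∑ τ : Equiv.Perm (Fin b), wgt (b - 1) sb (wd (fun i => ((τ i : Fin b) : ℕ))) P Q) := by
    intro s hs
    rw [Finset.mem_powersetCard] at hs
    have hsa : s.card = a := hs.2
    have hsb : (sᶜ : Finset (Fin N)).card = b := by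
      rw [Finset.card_compl, hsa]; simp; omega
    have hstep : ∑ ef : (Fin a ≃ {x // x ∈ s}) × (Fin b ≃ {x // x ∈ (sᶜ : Finset (Fin N))}),
        (wgt (a - 1) sa (wd (fun i => ((ef.1 i : Fin N) : ℕ))) p q) *
        (wgt (b - 1) sb (wd (fun i => ((ef.2 i : Fin N) : ℕ))) P Q)
        = ∑ σ ∈ Finset.filter
          (fun σ : Equiv.Perm (Fin N) =>
            Finset.image σ (univ.filter (fun k : Fin N => (k : ℕ) < a)) = s) univ,
        (wgt (a - 1) sa (wd (fun k => ((σ k : Fin N) : ℕ))) p q) *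
        (wgt (b - 1) sb (fun i => wd (fun k => ((σ k : Fin N) : ℕ)) (a + i)) P Q) := by
      refine Finset.sum_bij (fun ef _ => glueEquiv hab s ef.1 ef.2) ?_ ?_ ?_ ?_
      · -- membership
        rintro ⟨e, f⟩ -
        simp only [Finset.mem_filter, Finset.mem_univ, true_and]
        ext x
        simp only [Finset.mem_image, Finset.mem_filter, Finset.mem_univ, true_and]
        constructor
        · rintro ⟨k, hk, rfl⟩
          rw [glueEquiv_apply_lt hab s e f k hk]
          exact (e _).2
        · intro hx
          set i := e.symm ⟨x, hx⟩ with hi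
          refine ⟨⟨(i : ℕ), lt_of_lt_of_le i.isLt (by omega)⟩, i.isLt, ?_⟩
          rw [glueEquiv_apply_lt hab s e f _ i.isLt]
          have : (⟨(i : ℕ), i.isLt⟩ : Fin a) = i := Fin.ext rfl
          rw [this, hi, Equiv.apply_symm_apply]
      · -- injectivity
        intro ef h1 ef' h2 hEq
        obtain ⟨e, f⟩ := ef
        obtain ⟨e', f'⟩ := ef'
        have happ : ∀ k : Fin N, glueEquiv hab s e f k = glueEquiv hab s e' f' k :=
          fun k => DFunLike.congr_fun hEq k
        refine Prod.ext ?_ ?_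
        · ext i
          have hiN : (i : ℕ) < N := lt_of_lt_of_le i.isLt (by omega)
          have hk := happ ⟨(i : ℕ), hiN⟩
          rw [glueEquiv_apply_lt hab s e f ⟨(i : ℕ), hiN⟩ i.isLt,
            glueEquiv_apply_lt hab s e' f' ⟨(i : ℕ), hiN⟩ i.isLt] at hk
          have hmk : (⟨(i : ℕ), i.isLt⟩ : Fin a) = i := Fin.ext rfl
          rw [hmk] at hk
          exact congrArg Fin.val hk
        · ext j
          have hjN : a + (j : ℕ) < N := by have := j.isLt; omega
          have hk := happ ⟨a + (j : ℕ), hjN⟩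
          have hge : ¬ ((⟨a + (j : ℕ), hjN⟩ : Fin N) : ℕ) < a := by simp
          rw [glueEquiv_apply_ge hab s e f ⟨a + (j : ℕ), hjN⟩ hge,
            glueEquiv_apply_ge hab s e' f' ⟨a + (j : ℕ), hjN⟩ hge] at hk
          have hmk : (⟨((⟨a + (j : ℕ), hjN⟩ : Fin N) : ℕ) - a, by have := j.isLt; omega⟩ : Fin b) = j :=
            Fin.ext (by simp)
          rw [hmk] at hk
          exact congrArg Fin.val hk
      · -- surjectivity
        intro σ hσ
        simp only [Finset.mem_filter, Finset.mem_univ, true_and] at hσ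
        subst hσ
        have he0 : ∀ i : Fin a,
            σ ⟨(i : ℕ), by omega⟩ ∈ Finset.image σ (univ.filter (fun k : Fin N => (k : ℕ) < a)) := by
          intro i
          exact Finset.mem_image.2 ⟨⟨(i : ℕ), by omega⟩,
              Finset.mem_filter.2 ⟨Finset.mem_univ _, i.isLt⟩, rfl⟩
        have hf0 : ∀ j : Fin b, σ ⟨a + (j : ℕ), by omega⟩ ∈
            ((Finset.image σ (univ.filter (fun k : Fin N => (k : ℕ) < a)))ᶜ : Finset (Fin N)) := by
          intro j
          rw [Finset.mem_compl]
          intro hmem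
          obtain ⟨k, hk, hk2⟩ := Finset.mem_image.1 hmem
          rw [Finset.mem_filter] at hk
          have := σ.injective hk2
          have := congrArg Fin.val this
          simp only at this
          omega
        have hebij : Function.Bijective (fun i : Fin a => (⟨σ ⟨(i : ℕ), by omega⟩, he0 i⟩ :
            {x // x ∈ Finset.image σ (univ.filter (fun k : Fin N => (k : ℕ) < a))})) := by
          rw [Fintype.bijective_iff_injective_and_card]
          constructor
          · intro i j hij
            have := σ.injective (congrArg Subtype.val hij)
            have := congrArg Fin.val this
            simp only at this
            exact Fin.ext this
          · rw [Fintype.card_coe, hsa, Fintype.card_fin]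
        have hfbij : Function.Bijective (fun j : Fin b => (⟨σ ⟨a + (j : ℕ), by omega⟩, hf0 j⟩ :
            {x // x ∈ ((Finset.image σ (univ.filter (fun k : Fin N => (k : ℕ) < a)))ᶜ : Finset (Fin N))})) := by
          rw [Fintype.bijective_iff_injective_and_card]
          constructor
          · intro i j hij
            have := σ.injective (congrArg Subtype.val hij)
            have := congrArg Fin.val this
            simp only at this
            exact Fin.ext (by omega)
          · rw [Fintype.card_coe, hsb, Fintype.card_fin]
        refine ⟨⟨Equiv.ofBijective _ hebij, Equiv.ofBijective _ hfbij⟩, Finset.mem_univ _, ?_⟩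
        ext k
        by_cases hk : (k : ℕ) < a
        · rw [glueEquiv_apply_lt hab _ (Equiv.ofBijective _ hebij) (Equiv.ofBijective _ hfbij) k hk]
          exact congrArg Fin.val (congrArg σ (Fin.ext rfl))
        · rw [glueEquiv_apply_ge hab _ (Equiv.ofBijective _ hebij) (Equiv.ofBijective _ hfbij) k hk]
          simp only [Equiv.ofBijective_apply]
          exact congrArg Fin.val (congrArg σ (Fin.ext (by have := k.isLt; simp; omega)))
      · -- values
        rintro ⟨e, f⟩ -
        have hword : ∀ t, t < a →
            wd (fun k : Fin N => ((glueEquiv hab s e f k : Fin N) : ℕ)) t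
              = wd (fun i : Fin a => ((e i : Fin N) : ℕ)) t := by
          intro t ht
          have htN : t < N := by omega
          simp only [wd, dif_pos ht, dif_pos htN]
          rw [glueEquiv_apply_lt hab s e f ⟨t, htN⟩ ht]
        have hword2 : ∀ t, t < b →
            wd (fun k : Fin N => ((glueEquiv hab s e f k : Fin N) : ℕ)) (a + t)
              = wd (fun j : Fin b => ((f j : Fin N) : ℕ)) t := by
          intro t ht
          have htN : a + t < N := by omega
          simp only [wd, dif_pos ht, dif_pos htN]
          have hge : ¬ ((⟨a + t, htN⟩ : Fin N) : ℕ) < a := by simp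
          rw [glueEquiv_apply_ge hab s e f ⟨a + t, htN⟩ hge]
          exact congrArg (fun z : Fin b => ((f z : Fin N) : ℕ)) (Fin.ext (by simp))
        congr 1
        · apply wgt_congr
          apply wset_congr
          intro i hi
          rw [hword i (by omega), hword (i + 1) (by omega)]
        · apply wgt_congr
          apply wset_congr
          intro i hi
          rw [hword2 i (by omega), hword2 (i + 1) (by omega)]
    rw [← hstep, ← sum_over_equiv s hsa sa p q, ← sum_over_equiv (sᶜ : Finset (Fin N)) hsb sb P Q,
      Finset.sum_mul_sum]
    exact Fintype.sum_prod_type _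
  rw [Finset.sum_congr rfl hfiber, Finset.sum_const, Finset.card_powersetCard,
    Finset.card_univ, Fintype.card_fin, nsmul_eq_mul, mul_assoc]

section ins
variable {m : ℕ}

def insFun (j : Fin (m + 1)) (σ : Equiv.Perm (Fin m)) : Fin (m + 1) → Fin (m + 1) :=
  j.insertNth (Fin.last m) (fun i => (σ i).castSucc)

lemma insFun_bij (j : Fin (m + 1)) (σ : Equiv.Perm (Fin m)) : Function.Bijective (insFun j σ) := by
  rw [Fintype.bijective_iff_injective_and_card]
  refine ⟨?_, rfl⟩
  intro k k' h
  unfold insFun at h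
  rcases eq_or_ne k j with rfl | hk
  · rcases eq_or_ne k' k with rfl | hk'
    · rfl
    · obtain ⟨z, rfl⟩ := Fin.exists_succAbove_eq hk'
      rw [Fin.insertNth_apply_same, Fin.insertNth_apply_succAbove] at h
      exact absurd h.symm (Fin.castSucc_lt_last (σ z)).ne
  · obtain ⟨z, rfl⟩ := Fin.exists_succAbove_eq hk
    rcases eq_or_ne k' j with rfl | hk'
    · rw [Fin.insertNth_apply_same, Fin.insertNth_apply_succAbove] at h
      exact absurd h (Fin.castSucc_lt_last (σ z)).ne
    · obtain ⟨z', rfl⟩ := Fin.exists_succAbove_eq hk'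
      rw [Fin.insertNth_apply_succAbove, Fin.insertNth_apply_succAbove] at h
      have := σ.injective (Fin.castSucc_injective m h)
      rw [this]

noncomputable def insPerm (j : Fin (m + 1)) (σ : Equiv.Perm (Fin m)) : Equiv.Perm (Fin (m + 1)) :=
  Equiv.ofBijective _ (insFun_bij j σ)

lemma insPerm_val_lt (j : Fin (m + 1)) (σ : Equiv.Perm (Fin m)) (t : ℕ) (ht : t < (j : ℕ)) :
    ((insPerm j σ ⟨t, by have := j.isLt; omega⟩ : Fin (m + 1)) : ℕ)
      = ((σ ⟨t, by have := j.isLt; omega⟩ : Fin m) : ℕ) := by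
  have htm : t < m := by have := j.isLt; omega
  have hsa : (⟨t, by omega⟩ : Fin (m + 1)) = j.succAbove ⟨t, htm⟩ := by
    rw [Fin.succAbove_of_castSucc_lt j ⟨t, htm⟩ (by rw [Fin.lt_iff_val_lt_val]; simpa using ht)]
    exact Fin.ext (by simp)
  rw [insPerm]
  simp only [Equiv.ofBijective_apply]
  rw [insFun, hsa, Fin.insertNth_apply_succAbove]
  simp

lemma insPerm_val_same (j : Fin (m + 1)) (σ : Equiv.Perm (Fin m)) :
    ((insPerm j σ j : Fin (m + 1)) : ℕ) = m := by
  rw [insPerm]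
  simp only [Equiv.ofBijective_apply]
  rw [insFun, Fin.insertNth_apply_same]
  simp

lemma insPerm_val_gt (j : Fin (m + 1)) (σ : Equiv.Perm (Fin m)) (t : ℕ) (ht : (j : ℕ) < t)
    (htm : t ≤ m) :
    ((insPerm j σ ⟨t, by omega⟩ : Fin (m + 1)) : ℕ) = ((σ ⟨t - 1, by omega⟩ : Fin m) : ℕ) := by
  have hsa : (⟨t, by omega⟩ : Fin (m + 1)) = j.succAbove ⟨t - 1, by omega⟩ := by
    rw [Fin.succAbove_of_le_castSucc j ⟨t - 1, by omega⟩ (by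
      rw [Fin.le_def]; simpa using by omega)]
    exact Fin.ext (by simp; omega)
  rw [insPerm]
  simp only [Equiv.ofBijective_apply]
  rw [insFun, hsa, Fin.insertNth_apply_succAbove]
  simp

end ins

section decomp
variable {m : ℕ}

lemma ins_wset (j : Fin (m + 1)) (σ : Equiv.Perm (Fin m)) :
    wset m (wd (fun k : Fin (m + 1) => ((insPerm j σ k : Fin (m + 1)) : ℕ)))
      = wset ((j : ℕ) - 1) (wd (fun i : Fin m => ((σ i : Fin m) : ℕ)))
        ∪ (if (j : ℕ) < m then {(j : ℕ)} else ∅)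
        ∪ (wset (m - (j : ℕ) - 1)
            (fun i => wd (fun k : Fin m => ((σ k : Fin m) : ℕ)) ((j : ℕ) + i))).image
              (· + ((j : ℕ) + 1)) := by
  set a := (j : ℕ) with ha
  have ham : a ≤ m := by have := j.isLt; omega
  set W := wd (fun k : Fin (m + 1) => ((insPerm j σ k : Fin (m + 1)) : ℕ)) with hW
  set L := wd (fun i : Fin m => ((σ i : Fin m) : ℕ)) with hL
  have hWlt : ∀ t, t < a → W t = L t := by
    intro t ht
    have htm : t < m := by omega
    rw [hW, hL]
    simp only [wd, dif_pos (show t < m + 1 by omega), dif_pos htm]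
    exact insPerm_val_lt j σ t ht
  have hWa : W a = m := by
    rw [hW]
    simp only [wd, dif_pos (show a < m + 1 by omega)]
    have : (⟨a, show a < m + 1 by omega⟩ : Fin (m + 1)) = j := Fin.ext rfl
    rw [this]
    exact insPerm_val_same j σ
  have hWgt : ∀ t, a < t → t ≤ m → W t = L (t - 1) := by
    intro t ht htm
    rw [hW, hL]
    simp only [wd, dif_pos (show t < m + 1 by omega), dif_pos (show t - 1 < m by omega)]
    exact insPerm_val_gt j σ t ht htm
  have hLlt : ∀ t, t < m → L t < m := by
    intro t ht
    rw [hL]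
    simp only [wd, dif_pos ht]
    exact (σ ⟨t, ht⟩).isLt
  ext t
  simp only [wset, Finset.mem_union, Finset.mem_filter, Finset.mem_range, Finset.mem_image,
    Finset.mem_singleton]
  by_cases h1 : t + 1 < a
  · rw [hWlt _ h1, hWlt _ (by omega)]
    constructor
    · rintro ⟨htm, hlt⟩
      exact Or.inl (Or.inl ⟨by omega, hlt⟩)
    · rintro ((⟨hr, hlt⟩ | hx) | ⟨i, ⟨hi, hlt⟩, rfl⟩)
      · exact ⟨by omega, hlt⟩
      · exfalso
        have hxa : t = a := by
          by_cases ham2 : a < m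
          · simpa [ham2] using hx
          · simp [ham2] at hx
        omega
      · omega
  · by_cases h2 : t + 1 = a
    · have hw1 : W (t + 1) = (m : ℕ) := by rw [h2]; exact hWa
      have hw0 : W t = L t := hWlt _ (by omega)
      constructor
      · rintro ⟨htm, hlt⟩
        rw [hw1, hw0] at hlt
        exact absurd hlt (by have := hLlt t (by omega); omega)
      · rintro ((⟨hr, hlt⟩ | hx) | ⟨i, ⟨hi, hlt⟩, rfl⟩)
        · omega
        · exfalso
          have hxa : t = a := by
            by_cases ham2 : a < m
            · simpa [ham2] using hx
            · simp [ham2] at hx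
          omega
        · omega
    · by_cases h3 : t = a
      · by_cases ham2 : a < m
        · have hw1 : W (t + 1) = L t := by
            rw [h3, hWgt (a + 1) (by omega) (by omega), show a + 1 - 1 = a from by omega, ← h3]
          have hw0 : W t = m := by rw [h3]; exact hWa
          have hlt : W (t + 1) < W t := by
            rw [hw1, hw0, h3]
            exact hLlt a ham2
          exact iff_of_true ⟨by omega, hlt⟩
            (Or.inl (Or.inr (by rw [if_pos ham2]; simp [h3])))
        · constructor
          · rintro ⟨htm, -⟩; omega
          · rintro ((⟨hr, hlt⟩ | hx) | ⟨i, ⟨hi, hlt⟩, rfl⟩)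
            · omega
            · simp [ham2] at hx
            · omega
      · -- t > a
        have hta : a < t := by omega
        by_cases htm : t < m
        · rw [hWgt (t + 1) (by omega) (by omega), hWgt t (by omega) (by omega)]
          have e1 : t + 1 - 1 = t := by omega
          rw [e1]
          constructor
          · rintro ⟨-, hlt⟩
            refine Or.inr ⟨t - a - 1, ⟨by omega, ?_⟩, by omega⟩
            have e2 : a + (t - a - 1 + 1) = t := by omega
            have e3 : a + (t - a - 1) = t - 1 := by omega
            rw [e2, e3]
            exact hlt
          · rintro ((⟨hr, hlt⟩ | hx) | ⟨i, ⟨hi, hlt⟩, hit⟩)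
            · omega
            · exfalso
              have hxa : t = a := by
                by_cases ham2 : a < m
                · simpa [ham2] using hx
                · simp [ham2] at hx
              omega
            · have e2 : a + (i + 1) = t := by omega
              have e3 : a + i = t - 1 := by omega
              rw [e2, e3] at hlt
              exact ⟨htm, hlt⟩
        · constructor
          · rintro ⟨h, -⟩; omega
          · rintro ((⟨hr, hlt⟩ | hx) | ⟨i, ⟨hi, hlt⟩, rfl⟩)
            · omega
            · exfalso
              have hxa : t = a := by
                by_cases ham2 : a < m
                · simpa [ham2] using hx
                · simp [ham2] at hx
              omega
            · omega

end decomp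

lemma card_filter_union3 (A B C : Finset ℕ) (P : ℕ → Prop) [DecidablePred P]
    (hAB : Disjoint A B) (hAC : Disjoint A C) (hBC : Disjoint B C) :
    ((A ∪ B ∪ C).filter P).card
      = (A.filter P).card + (B.filter P).card + (C.filter P).card := by
  rw [Finset.filter_union, Finset.filter_union]
  rw [Finset.card_union_of_disjoint (by
    rw [Finset.disjoint_union_left]
    exact ⟨Finset.disjoint_filter_filter hAC, Finset.disjoint_filter_filter hBC⟩)]
  rw [Finset.card_union_of_disjoint (Finset.disjoint_filter_filter hAB)]

lemma wset_mem_lt {g : ℕ} {w : ℕ → ℕ} {x : ℕ} (hx : x ∈ wset g w) : x < g :=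
  Finset.mem_range.1 (Finset.mem_filter.1 hx).1

lemma ins_wgt {m : ℕ} (j : Fin (m + 1)) (σ : Equiv.Perm (Fin m)) (p q : ℝ) :
    wgt m 0 (wd (fun k : Fin (m + 1) => ((insPerm j σ k : Fin (m + 1)) : ℕ))) p q
      = (if (j : ℕ) = m then 1 else if Even (j : ℕ) then p else q)
        * wgt ((j : ℕ) - 1) 0 (wd (fun i : Fin m => ((σ i : Fin m) : ℕ))) p q
        * wgt (m - (j : ℕ) - 1) ((j : ℕ) + 1)
            (fun i => wd (fun k : Fin m => ((σ k : Fin m) : ℕ)) ((j : ℕ) + i)) p q := by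
  set a := (j : ℕ) with ha
  have ham : a ≤ m := by have := j.isLt; omega
  set L := wd (fun i : Fin m => ((σ i : Fin m) : ℕ)) with hL
  set Rw := (fun i => wd (fun k : Fin m => ((σ k : Fin m) : ℕ)) (a + i)) with hRw
  set A := wset (a - 1) L with hA
  set B : Finset ℕ := if a < m then {a} else ∅ with hB
  set C' := wset (m - a - 1) Rw with hC'
  have hmemB : ∀ x ∈ B, x = a := by
    intro x hx
    by_cases h : a < m
    · rw [hB, if_pos h] at hx; simpa using hx
    · rw [hB, if_neg h] at hx; simp at hx
  have hAB : Disjoint A B := by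
    rw [Finset.disjoint_left]
    intro x hxA hxB
    have := wset_mem_lt hxA
    have := hmemB x hxB
    omega
  have hAC : Disjoint A (C'.image (· + (a + 1))) := by
    rw [Finset.disjoint_left]
    intro x hxA hxC
    obtain ⟨i, hi, rfl⟩ := Finset.mem_image.1 hxC
    have := wset_mem_lt hxA
    omega
  have hBC : Disjoint B (C'.image (· + (a + 1))) := by
    rw [Finset.disjoint_left]
    intro x hxB hxC
    obtain ⟨i, hi, rfl⟩ := Finset.mem_image.1 hxC
    have := hmemB _ hxB
    omega
  have hinj : Function.Injective (· + (a + 1)) := add_left_injective (a + 1)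
  have keyset := ins_wset j σ
  unfold wgt ecard ocard
  rw [keyset, card_filter_union3 _ _ _ _ hAB hAC hBC, card_filter_union3 _ _ _ _ hAB hAC hBC]
  have himgE : ((C'.image (· + (a + 1))).filter (fun i => Even (i + 0))).card
      = (C'.filter (fun i => Even (i + (a + 1)))).card := by
    rw [Finset.filter_image, Finset.card_image_of_injective _ hinj]
    simp only [add_zero]
  have himgO : ((C'.image (· + (a + 1))).filter (fun i => Odd (i + 0))).card
      = (C'.filter (fun i => Odd (i + (a + 1)))).card := by
    rw [Finset.filter_image, Finset.card_image_of_injective _ hinj]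
    simp only [add_zero]
  rw [himgE, himgO]
  by_cases hem : a = m
  · have hnlt : ¬ a < m := by omega
    rw [if_pos hem, hB]
    simp only [if_neg hnlt, Finset.filter_empty, Finset.card_empty]
    ring
  · have hlt : a < m := by omega
    rw [if_neg hem, hB]
    simp only [if_pos hlt]
    by_cases hev : Even a
    · rw [if_pos hev]
      have h1 : (({a} : Finset ℕ).filter (fun i => Even (i + 0))).card = 1 := by
        rw [Finset.filter_singleton, if_pos (by simpa using hev)]
        simp
      have h2 : (({a} : Finset ℕ).filter (fun i => Odd (i + 0))).card = 0 := by
        rw [Finset.filter_singleton, if_neg (by simpa using (Nat.not_odd_iff_even.2 hev))]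
        simp
      rw [h1, h2]
      ring
    · rw [if_neg hev]
      have h1 : (({a} : Finset ℕ).filter (fun i => Even (i + 0))).card = 0 := by
        rw [Finset.filter_singleton, if_neg (by simpa using hev)]
        simp
      have h2 : (({a} : Finset ℕ).filter (fun i => Odd (i + 0))).card = 1 := by
        rw [Finset.filter_singleton, if_pos (by simpa using (Nat.not_even_iff_odd.1 hev))]
        simp
      rw [h1, h2]
      ring

lemma insPerm_apply_same {m : ℕ} (j : Fin (m + 1)) (σ : Equiv.Perm (Fin m)) :
    insPerm j σ j = Fin.last m := by
  rw [insPerm]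
  simp only [Equiv.ofBijective_apply]
  rw [insFun, Fin.insertNth_apply_same]

lemma insPerm_apply_succAbove {m : ℕ} (j : Fin (m + 1)) (σ : Equiv.Perm (Fin m)) (i : Fin m) :
    insPerm j σ (j.succAbove i) = (σ i).castSucc := by
  rw [insPerm]
  simp only [Equiv.ofBijective_apply]
  rw [insFun, Fin.insertNth_apply_succAbove]

lemma insPerm_bij {m : ℕ} : Function.Bijective
    (fun x : Fin (m + 1) × Equiv.Perm (Fin m) => insPerm x.1 x.2) := by
  rw [Fintype.bijective_iff_injective_and_card]
  constructor
  · rintro ⟨j, σ⟩ ⟨j', σ'⟩ h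
    simp only at h
    have happ : ∀ k, insPerm j σ k = insPerm j' σ' k := fun k => DFunLike.congr_fun h k
    have hj : j = j' := by
      have h1 : insPerm j' σ' j = Fin.last m := by rw [← happ j, insPerm_apply_same]
      have h2 : insPerm j' σ' j' = Fin.last m := insPerm_apply_same j' σ'
      exact (insPerm j' σ').injective (h1.trans h2.symm)
    subst hj
    have hσ : σ = σ' := by
      ext i
      have := happ (j.succAbove i)
      rw [insPerm_apply_succAbove, insPerm_apply_succAbove] at this
      have := Fin.castSucc_injective m this
      rw [this]
    rw [hσ]
  · rw [Fintype.card_prod, Fintype.card_perm, Fintype.card_perm, Fintype.card_fin,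
      Fintype.card_fin, Nat.factorial_succ]

lemma step1 (m : ℕ) (p q : ℝ) :
    refinedEulerian (m + 1) p q
      = ∑ j : Fin (m + 1),
          (if (j : ℕ) = m then 1 else if Even (j : ℕ) then p else q)
          * (((m.choose (j : ℕ) : ℝ))
            * refinedEulerian ((j : ℕ)) p q
            * (if Even (j : ℕ) then refinedEulerian (m - (j : ℕ)) q p
               else refinedEulerian (m - (j : ℕ)) p q)) := by
  rw [refinedEulerian_eq]
  rw [← Fintype.sum_bijective (fun x : Fin (m + 1) × Equiv.Perm (Fin m) => insPerm x.1 x.2)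
    insPerm_bij
    (fun x : Fin (m + 1) × Equiv.Perm (Fin m) =>
      wgt (m + 1 - 1) 0 (wd (fun k : Fin (m + 1) => ((insPerm x.1 x.2 k : Fin (m + 1)) : ℕ))) p q)
    _ (fun x => rfl)]
  rw [Fintype.sum_prod_type]
  apply Finset.sum_congr rfl
  intro j _
  have ham : (j : ℕ) ≤ m := by have := j.isLt; omega
  have hab : (j : ℕ) + (m - (j : ℕ)) = m := by omega
  have hstep : ∀ σ : Equiv.Perm (Fin m),
      wgt (m + 1 - 1) 0 (wd (fun k : Fin (m + 1) => ((insPerm j σ k : Fin (m + 1)) : ℕ))) p q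
        = (if (j : ℕ) = m then 1 else if Even (j : ℕ) then p else q)
          * ((wgt ((j : ℕ) - 1) 0 (wd (fun i : Fin m => ((σ i : Fin m) : ℕ))) p q)
            * (wgt (m - (j : ℕ) - 1) ((j : ℕ) + 1)
                (fun i => wd (fun k : Fin m => ((σ k : Fin m) : ℕ)) ((j : ℕ) + i)) p q)) := by
    intro σ
    rw [show m + 1 - 1 = m from rfl, ins_wgt j σ p q, mul_assoc]
  rw [Finset.sum_congr rfl (fun σ _ => hstep σ), ← Finset.mul_sum]
  congr 1
  rw [key_split hab 0 ((j : ℕ) + 1) p q p q]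
  rw [← refinedEulerian_eq]
  by_cases hev : Even (j : ℕ)
  · rw [if_pos hev]
    have hodd : Odd ((j : ℕ) + 1) := Even.add_one hev
    have hshift : ∀ τ : Equiv.Perm (Fin (m - (j : ℕ))),
        wgt (m - (j : ℕ) - 1) ((j : ℕ) + 1) (wd (fun i => ((τ i : Fin (m - (j : ℕ))) : ℕ))) p q
          = wgt (m - (j : ℕ) - 1) 0 (wd (fun i => ((τ i : Fin (m - (j : ℕ))) : ℕ))) q p :=
      fun τ => wgt_shift_odd hodd _ p q
    rw [Finset.sum_congr rfl (fun τ _ => hshift τ), ← refinedEulerian_eq]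
  · rw [if_neg hev]
    have heven : Even ((j : ℕ) + 1) := Odd.add_one (Nat.not_even_iff_odd.1 hev)
    have hshift : ∀ τ : Equiv.Perm (Fin (m - (j : ℕ))),
        wgt (m - (j : ℕ) - 1) ((j : ℕ) + 1) (wd (fun i => ((τ i : Fin (m - (j : ℕ))) : ℕ))) p q
          = wgt (m - (j : ℕ) - 1) 0 (wd (fun i => ((τ i : Fin (m - (j : ℕ))) : ℕ))) p q :=
      fun τ => wgt_shift_even heven _ p q
    rw [Finset.sum_congr rfl (fun τ _ => hshift τ), ← refinedEulerian_eq]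

lemma refinedEulerian_zero (p q : ℝ) : refinedEulerian 0 p q = 1 := by
  have h : ∀ π : Equiv.Perm (Fin 0), p ^ odes π * q ^ edes π = 1 := by
    intro π
    simp [odes, edes, descentSet]
  rw [refinedEulerian, Finset.sum_congr rfl (fun π _ => h π), Finset.sum_const, Finset.card_univ]
  simp [Fintype.card_perm]

lemma sum_range_two_mul (n : ℕ) (f : ℕ → ℝ) :
    ∑ k ∈ Finset.range (2 * n), f k
      = (∑ i ∈ Finset.range n, f (2 * i)) + ∑ i ∈ Finset.range n, f (2 * i + 1) := by
  induction n with
  | zero => simp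
  | succ n ih =>
    have h : 2 * (n + 1) = (2 * n + 1) + 1 := by ring
    rw [h, Finset.sum_range_succ, Finset.sum_range_succ, ih,
      Finset.sum_range_succ, Finset.sum_range_succ]
    ring

/-- A_{2n+1}(p,q) = A_{2n}(p,q) + p Σ_{i=0}^{n-1} C(2n,2i) A_{2i}(p,q) A_{2n-2i}(q,p)
    + q Σ_{i=1}^{n} C(2n,2i-1) A_{2i-1}(p,q) A_{2n-2i+1}(p,q). -/
theorem refinedEulerian_odd_rec (n : ℕ) (hn : 1 ≤ n) (p q : ℝ) :
    refinedEulerian (2 * n + 1) p q =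
      refinedEulerian (2 * n) p q +
        p * ∑ i ∈ Finset.range n,
          ((2 * n).choose (2 * i) : ℝ) *
            refinedEulerian (2 * i) p q * refinedEulerian (2 * n - 2 * i) q p +
        q * ∑ i ∈ Finset.Icc 1 n,
          ((2 * n).choose (2 * i - 1) : ℝ) *
            refinedEulerian (2 * i - 1) p q * refinedEulerian (2 * n - 2 * i + 1) p q := by
  rw [step1 (2 * n) p q]
  rw [Fin.sum_univ_eq_sum_range (fun k =>
    (if k = 2 * n then (1 : ℝ) else if Even k then p else q)
    * (((2 * n).choose k : ℝ) * refinedEulerian k p q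
      * (if Even k then refinedEulerian (2 * n - k) q p
         else refinedEulerian (2 * n - k) p q))) (2 * n + 1)]
  rw [Finset.sum_range_succ, sum_range_two_mul]
  have hlast :
      (if 2 * n = 2 * n then (1 : ℝ) else if Even (2 * n) then p else q)
      * (((2 * n).choose (2 * n) : ℝ) * refinedEulerian (2 * n) p q
        * (if Even (2 * n) then refinedEulerian (2 * n - 2 * n) q p
           else refinedEulerian (2 * n - 2 * n) p q))
      = refinedEulerian (2 * n) p q := by
    rw [if_pos rfl, if_pos (even_two_mul n), Nat.choose_self, Nat.sub_self,
      refinedEulerian_zero]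
    ring
  have heven : (∑ i ∈ Finset.range n, ((fun k =>
      (if k = 2 * n then (1 : ℝ) else if Even k then p else q)
      * (((2 * n).choose k : ℝ) * refinedEulerian k p q
        * (if Even k then refinedEulerian (2 * n - k) q p
           else refinedEulerian (2 * n - k) p q))) (2 * i)))
      = p * ∑ i ∈ Finset.range n,
          ((2 * n).choose (2 * i) : ℝ) *
            refinedEulerian (2 * i) p q * refinedEulerian (2 * n - 2 * i) q p := by
    rw [Finset.mul_sum]
    apply Finset.sum_congr rfl
    intro i hi
    rw [Finset.mem_range] at hi
    have h1 : ¬ (2 * i = 2 * n) := by omega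
    have h2 : Even (2 * i) := even_two_mul i
    simp only [if_neg h1, if_pos h2]
    try ring
  have hodd : (∑ i ∈ Finset.range n, ((fun k =>
      (if k = 2 * n then (1 : ℝ) else if Even k then p else q)
      * (((2 * n).choose k : ℝ) * refinedEulerian k p q
        * (if Even k then refinedEulerian (2 * n - k) q p
           else refinedEulerian (2 * n - k) p q))) (2 * i + 1)))
      = q * ∑ i ∈ Finset.Icc 1 n,
          ((2 * n).choose (2 * i - 1) : ℝ) *
            refinedEulerian (2 * i - 1) p q * refinedEulerian (2 * n - 2 * i + 1) p q := by
    rw [Finset.mul_sum, ← Finset.Ico_add_one_right_eq_Icc, Finset.sum_Ico_eq_sum_range]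
    simp only [Nat.add_sub_cancel]
    apply Finset.sum_congr rfl
    intro i hi
    rw [Finset.mem_range] at hi
    have h1 : ¬ (2 * i + 1 = 2 * n) := by omega
    have h2 : ¬ Even (2 * i + 1) := by simp [Nat.even_add_one, Nat.not_even_iff_odd]
    have e1 : 2 * (1 + i) - 1 = 2 * i + 1 := by omega
    have e2 : 2 * n - 2 * (1 + i) + 1 = 2 * n - (2 * i + 1) := by omega
    rw [e1, e2]
    simp only [if_neg h1, if_neg h2]
    try ring
  rw [hlast, heven, hodd]
  ring
end

section
/- For every n ≥ 1 and 0 ≤ j ≤ ⌊n/2⌋, the coefficient c_{n,j} of p^j in A_n(p,0) is positive; in fact c_{n,j} counts permutations of [n] with exactly j odd descents and no even descents, and for each such j there is at least one such permutation. -/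
open Finset

/-- `c_{n,j}`: the number of permutations of `[n]` with `j` odd descents and no even descents. -/
def cNum (n j : ℕ) : ℕ :=
  (Finset.univ.filter (fun π : Equiv.Perm (Fin n) => odes π = j ∧ edes π = 0)).card
def gfun (j i : ℕ) : ℕ := if i < 2*j then (if i % 2 = 0 then i+1 else i-1) else i

def sigmaPerm (n j : ℕ) (h : 2*j ≤ n) : Equiv.Perm (Fin n) :=
  Function.Involutive.toPerm
    (fun i => ⟨gfun j i, by have := i.2; simp only [gfun]; split_ifs <;> omega⟩)
    (fun i => by ext; simp only [gfun]; split_ifs <;> omega)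

lemma sigma_descent (n j : ℕ) (h : 2*j ≤ n) (i : ℕ) (hi : i + 1 < n) :
    ((sigmaPerm n j h) ⟨i+1, hi⟩ < (sigmaPerm n j h) ⟨i, Nat.lt_of_succ_lt hi⟩) ↔
      (i % 2 = 0 ∧ i < 2*j) := by
  simp only [sigmaPerm, Function.Involutive.coe_toPerm, Fin.lt_def, gfun]
  split_ifs <;> omega

lemma sigma_descentSet (n j : ℕ) (h : 2*j ≤ n) :
    descentSet (sigmaPerm n j h) = (range n).filter (fun i => i % 2 = 0 ∧ i < 2*j) := by
  ext i
  simp only [descentSet, mem_filter, mem_range]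
  constructor
  · rintro ⟨h1, h2, h3⟩
    exact ⟨h1, (sigma_descent n j h i h2).mp h3⟩
  · rintro ⟨h1, h2, h3⟩
    have hi : i + 1 < n := by omega
    exact ⟨h1, hi, (sigma_descent n j h i hi).mpr ⟨h2, h3⟩⟩

lemma sigma_odes (n j : ℕ) (h : 2*j ≤ n) : odes (sigmaPerm n j h) = j := by
  unfold odes
  rw [sigma_descentSet]
  have : ((range n).filter (fun i => i % 2 = 0 ∧ i < 2*j)).filter (fun i => Even i)
      = (range j).image (fun k => 2*k) := by
    ext i
    simp only [mem_filter, mem_range, mem_image, Nat.even_iff]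
    constructor
    · rintro ⟨⟨h1, h2, h3⟩, h4⟩
      exact ⟨i/2, by omega, by omega⟩
    · rintro ⟨k, hk, rfl⟩
      omega
  rw [this, card_image_of_injective _ (fun a b => by omega), card_range]

lemma sigma_edes (n j : ℕ) (h : 2*j ≤ n) : edes (sigmaPerm n j h) = 0 := by
  unfold edes
  rw [sigma_descentSet, card_eq_zero, filter_eq_empty_iff]
  intro i hi
  simp only [mem_filter, Nat.odd_iff] at hi ⊢
  omega

lemma odes_le (n : ℕ) (π : Equiv.Perm (Fin n)) : odes π ≤ n / 2 := by
  unfold odes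
  have hsub : (descentSet π).filter (fun i => Even i) ⊆ (range (n/2)).image (fun k => 2*k) := by
    intro i hi
    simp only [descentSet, mem_filter, mem_range, Nat.even_iff] at hi
    obtain ⟨⟨h1, h2, _⟩, h4⟩ := hi
    simp only [mem_image, mem_range]
    exact ⟨i/2, by omega, by omega⟩
  calc _ ≤ ((range (n/2)).image (fun k => 2*k)).card := card_le_card hsub
    _ = n / 2 := by rw [card_image_of_injective _ (fun a b => by omega), card_range]

/-- The coefficient c_{n,j} of p^j in A_n(p,0) counts permutations of [n] with j odd
descents and no even descents, and is positive for all 0 ≤ j ≤ ⌊n/2⌋. -/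
theorem cNum_pos (n : ℕ) (hn : 1 ≤ n) (j : ℕ) (hj : j ≤ n / 2) :
    (∀ p : ℝ, refinedEulerian n p 0 = ∑ k ∈ Finset.range (n / 2 + 1), (cNum n k : ℝ) * p ^ k) ∧
      0 < cNum n j := by
  constructor
  · intro p
    have step1 : refinedEulerian n p 0 =
        ∑ π ∈ Finset.univ.filter (fun π : Equiv.Perm (Fin n) => edes π = 0), p ^ odes π := by
      rw [refinedEulerian, Finset.sum_filter]
      refine Finset.sum_congr rfl fun π _ => ?_
      rcases Nat.eq_zero_or_pos (edes π) with h | h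
      · simp [h]
      · rw [if_neg h.ne', zero_pow h.ne', mul_zero]
    rw [step1, ← Finset.sum_fiberwise_of_maps_to (g := odes)
      (fun π _ => Finset.mem_range.mpr (Nat.lt_succ_of_le (odes_le n π)))]
    refine Finset.sum_congr rfl fun k _ => ?_
    rw [Finset.filter_filter]
    have hset : Finset.univ.filter (fun π : Equiv.Perm (Fin n) => edes π = 0 ∧ odes π = k)
        = Finset.univ.filter (fun π : Equiv.Perm (Fin n) => odes π = k ∧ edes π = 0) := by
      simp [and_comm]
    rw [hset]
    calc ∑ π ∈ Finset.univ.filter (fun π : Equiv.Perm (Fin n) => odes π = k ∧ edes π = 0),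
          p ^ odes π
        = ∑ π ∈ Finset.univ.filter (fun π : Equiv.Perm (Fin n) => odes π = k ∧ edes π = 0),
          p ^ k := Finset.sum_congr rfl fun π hπ => by rw [(Finset.mem_filter.mp hπ).2.1]
      _ = (cNum n k : ℝ) * p ^ k := by rw [Finset.sum_const, cNum, nsmul_eq_mul]
  · have h2j : 2*j ≤ n := by omega
    rw [cNum, Finset.card_pos]
    exact ⟨sigmaPerm n j h2j, Finset.mem_filter.mpr
      ⟨Finset.mem_univ _, sigma_odes n j h2j, sigma_edes n j h2j⟩⟩
end
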